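/- arXiv:1909.10999 — 5 statements merged into one kernel-verified Lean document; each statement's English description precedes it below -/
import Mathlib

section
/- The disturbance-feedback cost J̃ is strictly convex. Precisely: under the stated positive-(semi)definiteness assumptions on M, Σw, R, Σv, the function J̃ : ℝ^{mN×pN} → ℝ is a quadratic function of Q that is strictly convex on ℝ^{mN×pN}. -/
/-!
Along a line `Q + t • D` every term of `J̃` is the squared norm of a matrix or vector that is
affine in `t`, so `J̃` restricted to the line is a quadratic polynomial in `t` whose leading
coefficient `JtildeQuad D` is a sum of squared norms of expressions linear in `D`. One of them is
`‖R^{1/2} D Σv^{1/2}‖_F²`, positive for `D ≠ 0` since both square roots are invertible. A function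
that is a quadratic with positive leading coefficient on every line is strictly convex.
-/

open Matrix

noncomputable section

/-- The positive semidefinite square root of a positive semidefinite matrix, as defined in
the older Mathlib (`Matrix.PosSemidef.sqrt`, since removed). -/
def Matrix.PosSemidef.sqrt {n : Type*} [Fintype n] [DecidableEq n]
    {A : Matrix n n ℝ} (hA : A.PosSemidef) : Matrix n n ℝ :=
  hA.1.eigenvectorUnitary.1 * diagonal ((↑) ∘ (√·) ∘ hA.1.eigenvalues) *
    (star hA.1.eigenvectorUnitary : Matrix n n ℝ)

/-- Squared Frobenius norm of a real matrix. -/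
def frobSq {a b : Type*} [Fintype a] [Fintype b] (A : Matrix a b ℝ) : ℝ :=
  ∑ i, ∑ j, (A i j) ^ 2

/-- Squared Euclidean norm of a real vector. -/
def vecSq {a : Type*} [Fintype a] (v : a → ℝ) : ℝ :=
  ∑ i, (v i) ^ 2

/-- The finite-horizon LQG cost `J(K)` of the paper, written in terms of the
square roots `Msq = M^{1/2}`, `Swsq = Σw^{1/2}`, `Rsq = R^{1/2}`, `Svsq = Σv^{1/2}`. -/
def Jcost {nn mm pp : ℕ}
    (P11 : Matrix (Fin nn) (Fin nn) ℝ) (P12 : Matrix (Fin nn) (Fin mm) ℝ)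
    (C : Matrix (Fin pp) (Fin nn) ℝ)
    (Msq Swsq : Matrix (Fin nn) (Fin nn) ℝ)
    (Rsq : Matrix (Fin mm) (Fin mm) ℝ) (Svsq : Matrix (Fin pp) (Fin pp) ℝ)
    (μ : Fin nn → ℝ) (K : Matrix (Fin mm) (Fin pp) ℝ) : ℝ :=
  frobSq (Msq * (1 - P12 * K * C)⁻¹ * P11 * Swsq)
  + frobSq (Msq * P12 * K * (1 - C * P12 * K)⁻¹ * Svsq)
  + frobSq (Rsq * K * (1 - C * P12 * K)⁻¹ * C * P11 * Swsq)
  + frobSq (Rsq * K * (1 - C * P12 * K)⁻¹ * Svsq)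
  + vecSq ((Msq * (1 - P12 * K * C)⁻¹ * P11).mulVec μ)
  + vecSq ((Rsq * K * (1 - C * P12 * K)⁻¹ * C * P11).mulVec μ)

/-- The disturbance-feedback cost `J̃(Q)` of the paper, written in terms of the
square roots `Msq = M^{1/2}`, `Swsq = Σw^{1/2}`, `Rsq = R^{1/2}`, `Svsq = Σv^{1/2}`. -/
def Jtilde {nn mm pp : ℕ}
    (P11 : Matrix (Fin nn) (Fin nn) ℝ) (P12 : Matrix (Fin nn) (Fin mm) ℝ)
    (C : Matrix (Fin pp) (Fin nn) ℝ)
    (Msq Swsq : Matrix (Fin nn) (Fin nn) ℝ)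
    (Rsq : Matrix (Fin mm) (Fin mm) ℝ) (Svsq : Matrix (Fin pp) (Fin pp) ℝ)
    (μ : Fin nn → ℝ) (Q : Matrix (Fin mm) (Fin pp) ℝ) : ℝ :=
  frobSq (Msq * (1 + P12 * Q * C) * P11 * Swsq)
  + frobSq (Msq * P12 * Q * Svsq)
  + frobSq (Rsq * Q * C * P11 * Swsq)
  + frobSq (Rsq * Q * Svsq)
  + vecSq ((Rsq * Q * C * P11).mulVec μ)
  + vecSq ((Msq * (1 + P12 * Q * C) * P11).mulVec μ)

end

namespace Matrix.PosSemidef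

variable {n : Type*} [Fintype n] [DecidableEq n] {A : Matrix n n ℝ}

theorem sqrt_mul_self (hA : A.PosSemidef) : hA.sqrt * hA.sqrt = A := by
  have hU : (star hA.1.eigenvectorUnitary : Matrix n n ℝ) * hA.1.eigenvectorUnitary.1 = 1 :=
    Unitary.coe_star_mul_self _
  have hd : diagonal ((↑) ∘ (√·) ∘ hA.1.eigenvalues) * diagonal ((↑) ∘ (√·) ∘ hA.1.eigenvalues)
      = diagonal (RCLike.ofReal ∘ hA.1.eigenvalues : n → ℝ) := by
    rw [diagonal_mul_diagonal]
    congr 1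
    funext i
    simp [Real.mul_self_sqrt (hA.eigenvalues_nonneg i)]
  conv_rhs => rw [hA.1.spectral_theorem, Unitary.conjStarAlgAut_apply]
  unfold Matrix.PosSemidef.sqrt
  rw [Matrix.mul_assoc, Matrix.mul_assoc, ← Matrix.mul_assoc (star _ : Matrix n n ℝ),
    ← Matrix.mul_assoc (star _ : Matrix n n ℝ), hU, Matrix.one_mul, ← hd]
  simp only [Matrix.mul_assoc]

end Matrix.PosSemidef

theorem Matrix.PosDef.isUnit_sqrt {n : Type*} [Fintype n] [DecidableEq n] {A : Matrix n n ℝ}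
    (hA : A.PosDef) : IsUnit hA.posSemidef.sqrt :=
  isUnit_of_mul_isUnit_left (hA.posSemidef.sqrt_mul_self ▸ hA.isUnit)

section SquaredNorms

variable {a b : Type*} [Fintype a] [Fintype b]

theorem frobSq_nonneg (A : Matrix a b ℝ) : 0 ≤ frobSq A := by
  unfold frobSq
  positivity

theorem vecSq_nonneg (v : a → ℝ) : 0 ≤ vecSq v := by
  unfold vecSq
  positivity

theorem frobSq_pos {A : Matrix a b ℝ} (hA : A ≠ 0) : 0 < frobSq A := by
  obtain ⟨i, j, hij⟩ : ∃ i j, A i j ≠ 0 := by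
    by_contra! h
    exact hA (Matrix.ext h)
  have hrow : 0 < ∑ j, A i j ^ 2 :=
    Finset.sum_pos' (fun _ _ => sq_nonneg _) ⟨j, Finset.mem_univ _, by positivity⟩
  exact Finset.sum_pos' (fun _ _ => Finset.sum_nonneg fun _ _ => sq_nonneg _)
    ⟨i, Finset.mem_univ _, hrow⟩

theorem frobSq_add_smul (X Y : Matrix a b ℝ) (t : ℝ) :
    frobSq (X + t • Y) = frobSq Y * t ^ 2 + 2 * (X * Yᵀ).trace * t + frobSq X := by
  simp only [frobSq, trace, diag, mul_apply, transpose_apply, Matrix.add_apply, Matrix.smul_apply,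
    smul_eq_mul, Finset.mul_sum, Finset.sum_mul, ← Finset.sum_add_distrib]
  exact Finset.sum_congr rfl fun _ _ => Finset.sum_congr rfl fun _ _ => by ring

theorem vecSq_add_smul (v w : a → ℝ) (t : ℝ) :
    vecSq (v + t • w) = vecSq w * t ^ 2 + 2 * (v ⬝ᵥ w) * t + vecSq v := by
  simp only [vecSq, dotProduct, Pi.add_apply, Pi.smul_apply, smul_eq_mul, Finset.mul_sum,
    Finset.sum_mul, ← Finset.sum_add_distrib]
  exact Finset.sum_congr rfl fun _ _ => by ring

end SquaredNorms

theorem frobSq_mul_mul_pos {l p : Type*} [Fintype l] [Fintype p]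
    [DecidableEq l] [DecidableEq p] {A : Matrix l l ℝ} {B : Matrix p p ℝ} (hA : IsUnit A)
    (hB : IsUnit B) {D : Matrix l p ℝ} (hD : D ≠ 0) : 0 < frobSq (A * D * B) := by
  refine frobSq_pos fun h => hD ?_
  let := hA.invertible
  let := hB.invertible
  simpa [Matrix.mul_assoc] using congr_arg (fun X => A⁻¹ * X * B⁻¹) h

theorem strictConvexOn_univ_of_quadratic_on_lines {E : Type*} [AddCommGroup E] [Module ℝ E]
    {f : E → ℝ} (q : E → ℝ) (hq : ∀ d, d ≠ 0 → 0 < q d)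
    (hline : ∀ x d, ∃ b : ℝ, ∀ t : ℝ, f (x + t • d) = q d * t ^ 2 + b * t + f x) :
    StrictConvexOn ℝ Set.univ f := by
  refine ⟨convex_univ, fun x _ y _ hxy s t hs ht hst => ?_⟩
  obtain ⟨b, hf⟩ := hline x (y - x)
  have hy : f y = q (y - x) + b + f x := by simpa using hf 1
  obtain rfl : s = 1 - t := by linarith
  have hmid : (1 - t) • x + t • y = x + t • (y - x) := by
    rw [sub_smul, one_smul, smul_sub]
    abel
  have hpos : 0 < q (y - x) * (1 - t) * t := by
    have := hq _ (sub_ne_zero.mpr hxy.symm)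
    positivity
  rw [hmid, hf, hy, smul_eq_mul, smul_eq_mul]
  linear_combination hpos

section Jtilde

variable {nn mm pp : ℕ}
    (P11 : Matrix (Fin nn) (Fin nn) ℝ) (P12 : Matrix (Fin nn) (Fin mm) ℝ)
    (C : Matrix (Fin pp) (Fin nn) ℝ)
    (Msq Swsq : Matrix (Fin nn) (Fin nn) ℝ)
    (Rsq : Matrix (Fin mm) (Fin mm) ℝ) (Svsq : Matrix (Fin pp) (Fin pp) ℝ)
    (μ : Fin nn → ℝ)

def JtildeQuad (D : Matrix (Fin mm) (Fin pp) ℝ) : ℝ :=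
  frobSq (Msq * P12 * D * C * P11 * Swsq)
  + frobSq (Msq * P12 * D * Svsq)
  + frobSq (Rsq * D * C * P11 * Swsq)
  + frobSq (Rsq * D * Svsq)
  + vecSq ((Rsq * D * C * P11) *ᵥ μ)
  + vecSq ((Msq * P12 * D * C * P11) *ᵥ μ)

theorem Jtilde_add_smul (Q D : Matrix (Fin mm) (Fin pp) ℝ) :
    ∃ b : ℝ, ∀ t : ℝ, Jtilde P11 P12 C Msq Swsq Rsq Svsq μ (Q + t • D)
      = JtildeQuad P11 P12 C Msq Swsq Rsq Svsq μ D * t ^ 2 + b * t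
        + Jtilde P11 P12 C Msq Swsq Rsq Svsq μ Q := by
  have haffine : ∀ t : ℝ, Msq * (1 + P12 * (Q + t • D) * C) * P11
      = Msq * (1 + P12 * Q * C) * P11 + t • (Msq * P12 * D * C * P11) := fun t => by
    simp only [Matrix.mul_add, Matrix.add_mul, Matrix.mul_smul, Matrix.smul_mul, Matrix.mul_assoc]
    abel
  -- a quadratic with known leading and constant coefficients is pinned down by its value at `t = 1`
  refine ⟨Jtilde P11 P12 C Msq Swsq Rsq Svsq μ (Q + D)
    - JtildeQuad P11 P12 C Msq Swsq Rsq Svsq μ D - Jtilde P11 P12 C Msq Swsq Rsq Svsq μ Q,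
    fun t => ?_⟩
  rw [show Q + D = Q + (1 : ℝ) • D by rw [one_smul]]
  simp only [Jtilde, JtildeQuad, haffine]
  simp only [Matrix.mul_add, Matrix.add_mul, Matrix.mul_smul, Matrix.smul_mul, Matrix.add_mulVec,
    Matrix.smul_mulVec, frobSq_add_smul, vecSq_add_smul]
  ring

theorem JtildeQuad_pos (hR : IsUnit Rsq) (hV : IsUnit Svsq) {D : Matrix (Fin mm) (Fin pp) ℝ}
    (hD : D ≠ 0) : 0 < JtildeQuad P11 P12 C Msq Swsq Rsq Svsq μ D := by
  unfold JtildeQuad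
  linarith [frobSq_mul_mul_pos hR hV hD, frobSq_nonneg (Msq * P12 * D * C * P11 * Swsq),
    frobSq_nonneg (Msq * P12 * D * Svsq), frobSq_nonneg (Rsq * D * C * P11 * Swsq),
    vecSq_nonneg ((Rsq * D * C * P11) *ᵥ μ), vecSq_nonneg ((Msq * P12 * D * C * P11) *ᵥ μ)]

end Jtilde

theorem Jtilde_quadratic_strictConvex_general {n m p N : ℕ}
    (P11 : Matrix (Fin (n * (N + 1))) (Fin (n * (N + 1))) ℝ)
    (P12 : Matrix (Fin (n * (N + 1))) (Fin (m * N)) ℝ)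
    (C : Matrix (Fin (p * N)) (Fin (n * (N + 1))) ℝ)
    {M W : Matrix (Fin (n * (N + 1))) (Fin (n * (N + 1))) ℝ}
    {R : Matrix (Fin (m * N)) (Fin (m * N)) ℝ}
    {V : Matrix (Fin (p * N)) (Fin (p * N)) ℝ}
    (hM : M.PosSemidef) (hW : W.PosSemidef) (hR : R.PosDef) (hV : V.PosDef)
    (μ : Fin (n * (N + 1)) → ℝ) :
    StrictConvexOn ℝ Set.univ
      (Jtilde P11 P12 C hM.sqrt hW.sqrt hR.posSemidef.sqrt hV.posSemidef.sqrt μ) ∧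
    ∀ Q D : Matrix (Fin (m * N)) (Fin (p * N)) ℝ, ∃ a b c : ℝ, ∀ t : ℝ,
      Jtilde P11 P12 C hM.sqrt hW.sqrt hR.posSemidef.sqrt hV.posSemidef.sqrt μ (Q + t • D)
        = a * t ^ 2 + b * t + c := by
  have hline := Jtilde_add_smul P11 P12 C hM.sqrt hW.sqrt hR.posSemidef.sqrt hV.posSemidef.sqrt μ
  refine ⟨strictConvexOn_univ_of_quadratic_on_lines _
    (fun D hD => JtildeQuad_pos _ _ _ _ _ _ _ μ hR.isUnit_sqrt hV.isUnit_sqrt hD) hline,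
    fun Q D => ?_⟩
  obtain ⟨b, hb⟩ := hline Q D
  exact ⟨_, b, _, hb⟩

/-- Under the stated positive-(semi)definiteness assumptions on `M`, `Σw`,
`R`, `Σv`, the disturbance-feedback cost `J̃ : ℝ^{mN×pN} → ℝ` is a quadratic function of `Q`
(along every line it is a polynomial of degree at most two) that is strictly convex on the
whole space `ℝ^{mN×pN}`. -/
theorem Jtilde_quadratic_strictConvex {n m p N : ℕ}
    (hn : 0 < n) (hm : 0 < m) (hp : 0 < p) (hN : 0 < N)
    (P11 : Matrix (Fin (n * (N + 1))) (Fin (n * (N + 1))) ℝ)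
    (P12 : Matrix (Fin (n * (N + 1))) (Fin (m * N)) ℝ)
    (C : Matrix (Fin (p * N)) (Fin (n * (N + 1))) ℝ)
    {M W : Matrix (Fin (n * (N + 1))) (Fin (n * (N + 1))) ℝ}
    {R : Matrix (Fin (m * N)) (Fin (m * N)) ℝ}
    {V : Matrix (Fin (p * N)) (Fin (p * N)) ℝ}
    (hM : M.PosSemidef) (hW : W.PosSemidef) (hR : R.PosDef) (hV : V.PosDef)
    (μ : Fin (n * (N + 1)) → ℝ) :
    StrictConvexOn ℝ Set.univ
      (Jtilde P11 P12 C hM.sqrt hW.sqrt hR.posSemidef.sqrt hV.posSemidef.sqrt μ) ∧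
    ∀ Q D : Matrix (Fin (m * N)) (Fin (p * N)) ℝ, ∃ a b c : ℝ, ∀ t : ℝ,
      Jtilde P11 P12 C hM.sqrt hW.sqrt hR.posSemidef.sqrt hV.posSemidef.sqrt μ (Q + t • D)
        = a * t ^ 2 + b * t + c :=
  Jtilde_quadratic_strictConvex_general P11 P12 C hM hW hR hV μ
end

section
/- Quadratic invariance theorem: let 𝒦 ⊆ ℝ^{mN×pN} be a linear subspace such that K·G is nilpotent for every K ∈ 𝒦. Then the following three statements are equivalent: (1) the set {(I − K·G)^{-1}·K : K ∈ 𝒦} is a convex subset of ℝ^{mN×pN}; (2) 𝒦 is quadratically invariant with respect to G; (3) {(I − K·G)^{-1}·K : K ∈ 𝒦} = 𝒦. -/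
/-!
Write `F_G K = (1 - K G)⁻¹ K` (`feedbackMap G K`). If `K G` is nilpotent then
`F_G K = ∑ₖ (K G)ᵏ K`, and `1 + F_G(K) G = (1 - K G)⁻¹`, so that `F_{-G}` inverts `F_G`.

Quadratic invariance gives `(K G)ᵏ K ∈ 𝒦` for all `k` by polarization, hence `F_G 𝒦 ⊆ 𝒦`; since
`𝒦` is also quadratically invariant for `-G`, `F_{-G} 𝒦 ⊆ 𝒦` as well, and so `F_G 𝒦 = 𝒦`.

Conversely, if `S = F_G 𝒦` is convex, take `K ∈ 𝒦` and `X = F_G K ∈ S`. As `0 ∈ S`, the segment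
`t X` (`0 < t ≤ 1`) lies in `S`, so `F_{-G}(t X) = t ∑ₖ tᵏ (X (-G))ᵏ X` lies in `𝒦`. A polynomial
that takes values in `𝒦` at infinitely many points has its coefficients in `𝒦`, so every
`(X (-G))ᵏ X` is in `𝒦`; these are closed under `(Y, Z) ↦ Y (-G) Z`, and `K = F_{-G} X` is a
combination of them, whence `K G K ∈ 𝒦`.
-/

open Finset

variable {R 𝕜 a b : Type*} [Fintype a] [Fintype b]

theorem Submodule.coeff_mem_of_forall_sum_pow_smul_mem {V : Type*} [Field 𝕜] [AddCommGroup V]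
    [Module 𝕜 V] (W : Submodule 𝕜 V) {s : Set 𝕜} (hs : s.Infinite) {c : ℕ → V} {n : ℕ}
    (h : ∀ t ∈ s, ∑ k ∈ range n, t ^ k • c k ∈ W) {k : ℕ} (hk : k < n) : c k ∈ W := by
  rw [← W.ker_mkQ, LinearMap.mem_ker, ← Module.forall_dual_apply_eq_zero_iff 𝕜]
  intro φ
  set P : Polynomial 𝕜 := ∑ j ∈ range n, Polynomial.monomial j (φ (W.mkQ (c j)))
  have hP : P = 0 := by
    refine Polynomial.eq_zero_of_infinite_isRoot P (hs.mono fun t ht => ?_)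
    have h0 : φ (W.mkQ (∑ k ∈ range n, t ^ k • c k)) = 0 := by
      rw [show W.mkQ _ = 0 from (Submodule.Quotient.mk_eq_zero W).2 (h t ht), map_zero]
    simpa [P, Polynomial.eval_finsetSum, mul_comm] using h0
  simpa [P, Polynomial.finsetSum_coeff, Polynomial.coeff_monomial, hk]
    using congr_arg (Polynomial.coeff · k) hP

namespace Matrix

theorem inv_one_sub_eq_geom_sum [DecidableEq a] [CommRing R] {A : Matrix a a R} {n : ℕ}
    (hA : A ^ n = 0) : (1 - A)⁻¹ = ∑ k ∈ range n, A ^ k :=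
  inv_eq_right_inv (by rw [mul_neg_geom_sum, hA, sub_zero])

noncomputable def feedbackMap [DecidableEq a] [CommRing R] (G : Matrix b a R)
    (K : Matrix a b R) : Matrix a b R :=
  (1 - K * G)⁻¹ * K

def QuadraticallyInvariant [Semiring R] (G : Matrix b a R) (𝒦 : Submodule R (Matrix a b R)) :
    Prop :=
  ∀ K ∈ 𝒦, K * G * K ∈ 𝒦

section FeedbackMap

variable [DecidableEq a] [CommRing R] {G H : Matrix b a R} {K X : Matrix a b R}

@[simp]
theorem feedbackMap_zero : feedbackMap G (0 : Matrix a b R) = 0 := by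
  rw [feedbackMap, Matrix.mul_zero]

theorem feedbackMap_eq_sum {n : ℕ} (h : (K * G) ^ n = 0) :
    feedbackMap G K = ∑ k ∈ range n, (K * G) ^ k * K := by
  rw [feedbackMap, inv_one_sub_eq_geom_sum h, Matrix.sum_mul]

theorem feedbackMap_smul {n : ℕ} (h : (X * H) ^ n = 0) (t : R) :
    feedbackMap H (t • X) = t • ∑ k ∈ range n, t ^ k • ((X * H) ^ k * X) := by
  have htX : (t • X * H) ^ n = 0 := by rw [Matrix.smul_mul, smul_pow, h, smul_zero]
  rw [feedbackMap_eq_sum htX, Finset.smul_sum]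
  refine Finset.sum_congr rfl fun k _ => ?_
  rw [Matrix.smul_mul, smul_pow, Matrix.smul_mul, Matrix.mul_smul, smul_smul, smul_smul, mul_comm]

theorem one_sub_feedbackMap_mul_neg (h : IsUnit (1 - K * G)) :
    1 - feedbackMap G K * -G = (1 - K * G)⁻¹ := by
  have hdet := (isUnit_iff_isUnit_det _).1 h
  rw [feedbackMap, Matrix.mul_neg, sub_neg_eq_add, Matrix.mul_assoc]
  nth_rewrite 1 [← nonsing_inv_mul _ hdet]
  rw [← Matrix.mul_add, sub_add_cancel, Matrix.mul_one]

theorem feedbackMap_neg_feedbackMap (h : IsUnit (1 - K * G)) :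
    feedbackMap (-G) (feedbackMap G K) = K := by
  have hdet := (isUnit_iff_isUnit_det _).1 h
  rw [feedbackMap, one_sub_feedbackMap_mul_neg h, nonsing_inv_nonsing_inv _ hdet, feedbackMap,
    ← Matrix.mul_assoc, mul_nonsing_inv _ hdet, Matrix.one_mul]

theorem isNilpotent_feedbackMap_mul (h : IsNilpotent (K * G)) :
    IsNilpotent (feedbackMap G K * G) := by
  obtain ⟨n, hn⟩ := h
  rw [feedbackMap, Matrix.mul_assoc, inv_one_sub_eq_geom_sum hn]
  exact Commute.isNilpotent_mul_left
    (Commute.sum_left _ _ _ fun k _ => (Commute.refl _).pow_left k) ⟨n, hn⟩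

theorem feedbackMap_mul_feedbackMap_mem {𝒦 : Submodule R (Matrix a b R)} {n : ℕ}
    (hX : ∀ k, (X * H) ^ k * X ∈ 𝒦) (hn : (X * H) ^ n = 0) :
    feedbackMap H X * H * feedbackMap H X ∈ 𝒦 := by
  rw [feedbackMap_eq_sum hn, Matrix.sum_mul, Matrix.sum_mul]
  refine 𝒦.sum_mem fun j _ => ?_
  rw [Matrix.mul_sum]
  refine 𝒦.sum_mem fun k _ => ?_
  have : (X * H) ^ j * X * H * ((X * H) ^ k * X) = (X * H) ^ (j + 1 + k) * X := by
    rw [pow_add, pow_succ]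
    simp only [Matrix.mul_assoc]
  rw [this]
  exact hX _

end FeedbackMap

namespace QuadraticallyInvariant

section Ring

variable [Ring R] {G : Matrix b a R} {𝒦 : Submodule R (Matrix a b R)} {K L : Matrix a b R}

theorem mul_mul_add_mul_mul_mem (hqi : QuadraticallyInvariant G 𝒦) (hK : K ∈ 𝒦) (hL : L ∈ 𝒦) :
    K * G * L + L * G * K ∈ 𝒦 := by
  have h := 𝒦.sub_mem (hqi _ (𝒦.add_mem hK hL)) (𝒦.add_mem (hqi K hK) (hqi L hL))
  convert h using 1
  simp only [Matrix.add_mul, Matrix.mul_add]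
  abel

protected theorem neg (hqi : QuadraticallyInvariant G 𝒦) : QuadraticallyInvariant (-G) 𝒦 :=
  fun K hK => by simpa only [Matrix.mul_neg, Matrix.neg_mul] using 𝒦.neg_mem (hqi K hK)

end Ring

variable [DecidableEq a] [Field 𝕜] [CharZero 𝕜] {G : Matrix b a 𝕜}
  {𝒦 : Submodule 𝕜 (Matrix a b 𝕜)} {K : Matrix a b 𝕜}

theorem pow_mul_mem (hqi : QuadraticallyInvariant G 𝒦) (hK : K ∈ 𝒦) (k : ℕ) :
    (K * G) ^ k * K ∈ 𝒦 := by
  induction k with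
  | zero => simpa using hK
  | succ k ih =>
    have h := hqi.mul_mul_add_mul_mul_mem hK ih
    have hl : K * G * ((K * G) ^ k * K) = (K * G) ^ (k + 1) * K := by
      rw [← Matrix.mul_assoc, pow_succ']
    have hr : (K * G) ^ k * K * G * K = (K * G) ^ (k + 1) * K := by
      rw [pow_succ, Matrix.mul_assoc ((K * G) ^ k) K G]
    rwa [hl, hr, ← two_smul 𝕜, 𝒦.smul_mem_iff two_ne_zero] at h

theorem feedbackMap_mem (hqi : QuadraticallyInvariant G 𝒦) (hK : K ∈ 𝒦)
    (hnil : IsNilpotent (K * G)) : feedbackMap G K ∈ 𝒦 := by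
  obtain ⟨n, hn⟩ := hnil
  rw [feedbackMap_eq_sum hn]
  exact 𝒦.sum_mem fun k _ => hqi.pow_mul_mem hK k

theorem image_feedbackMap (hnilp : ∀ K ∈ 𝒦, IsNilpotent (K * G))
    (hqi : QuadraticallyInvariant G 𝒦) : feedbackMap G '' 𝒦 = 𝒦 := by
  refine subset_antisymm
    (Set.image_subset_iff.2 fun K hK => hqi.feedbackMap_mem hK (hnilp K hK)) fun K hK => ?_
  have hnil : IsNilpotent (K * -G) := by
    rw [Matrix.mul_neg]
    exact (hnilp K hK).neg
  refine ⟨feedbackMap (-G) K, hqi.neg.feedbackMap_mem hK hnil, ?_⟩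
  simpa only [neg_neg] using feedbackMap_neg_feedbackMap hnil.isUnit_one_sub

theorem of_convex_image_feedbackMap [LinearOrder 𝕜] [IsStrictOrderedRing 𝕜]
    (hnilp : ∀ K ∈ 𝒦, IsNilpotent (K * G)) (hconv : Convex 𝕜 (feedbackMap G '' 𝒦)) :
    QuadraticallyInvariant G 𝒦 := by
  intro K hK
  set X := feedbackMap G K
  obtain ⟨n, hn⟩ : IsNilpotent (X * -G) := by
    rw [Matrix.mul_neg]
    exact (isNilpotent_feedbackMap_mul (hnilp K hK)).neg
  have hseg : ∀ t ∈ Set.Ioc (0 : 𝕜) 1, t • X ∈ feedbackMap G '' 𝒦 := fun t ht => by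
    simpa using hconv ⟨K, hK, rfl⟩ ⟨0, 𝒦.zero_mem, feedbackMap_zero⟩ ht.1.le
      (sub_nonneg.2 ht.2) (add_sub_cancel t 1)
  have hsum : ∀ t ∈ Set.Ioc (0 : 𝕜) 1, ∑ k ∈ range n, t ^ k • ((X * -G) ^ k * X) ∈ 𝒦 := by
    intro t ht
    obtain ⟨L, hL, hLX⟩ := hseg t ht
    have hL' := feedbackMap_neg_feedbackMap (hnilp L hL).isUnit_one_sub
    rw [hLX, feedbackMap_smul hn] at hL'
    rw [← 𝒦.smul_mem_iff ht.1.ne', hL']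
    exact hL
  have hpow : ∀ k, (X * -G) ^ k * X ∈ 𝒦 := fun k => by
    rcases lt_or_ge k n with hk | hk
    · exact 𝒦.coeff_mem_of_forall_sum_pow_smul_mem (Set.Ioc_infinite zero_lt_one) hsum hk
    · rw [pow_eq_zero_of_le hk hn, Matrix.zero_mul]
      exact 𝒦.zero_mem
  have hKGK := feedbackMap_mul_feedbackMap_mem hpow hn
  rwa [feedbackMap_neg_feedbackMap (hnilp K hK).isUnit_one_sub, Matrix.mul_neg, Matrix.neg_mul,
    neg_mem_iff] at hKGK

end QuadraticallyInvariant

end Matrix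

open Matrix

theorem quadratic_invariance_tfae_general {m p N : ℕ}
    (G : Matrix (Fin (p * N)) (Fin (m * N)) ℝ)
    (𝒦 : Submodule ℝ (Matrix (Fin (m * N)) (Fin (p * N)) ℝ))
    (hnilp : ∀ K ∈ 𝒦, IsNilpotent (K * G)) :
    (Convex ℝ ((fun K : Matrix (Fin (m * N)) (Fin (p * N)) ℝ => (1 - K * G)⁻¹ * K) ''
        (𝒦 : Set (Matrix (Fin (m * N)) (Fin (p * N)) ℝ))) ↔
      ∀ K ∈ 𝒦, K * G * K ∈ 𝒦) ∧
    ((∀ K ∈ 𝒦, K * G * K ∈ 𝒦) ↔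
      (fun K : Matrix (Fin (m * N)) (Fin (p * N)) ℝ => (1 - K * G)⁻¹ * K) ''
        (𝒦 : Set (Matrix (Fin (m * N)) (Fin (p * N)) ℝ)) =
        (𝒦 : Set (Matrix (Fin (m * N)) (Fin (p * N)) ℝ))) := by
  have convex_qi : Convex ℝ (feedbackMap G '' 𝒦) → QuadraticallyInvariant G 𝒦 :=
    QuadraticallyInvariant.of_convex_image_feedbackMap hnilp
  have qi_image : QuadraticallyInvariant G 𝒦 → feedbackMap G '' 𝒦 = 𝒦 :=
    QuadraticallyInvariant.image_feedbackMap hnilp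
  have image_convex : feedbackMap G '' 𝒦 = 𝒦 → Convex ℝ (feedbackMap G '' 𝒦) :=
    fun h => h.symm ▸ 𝒦.convex
  exact ⟨⟨convex_qi, image_convex ∘ qi_image⟩, ⟨qi_image, convex_qi ∘ image_convex⟩⟩

/-- **Quadratic invariance theorem.** Let `𝒦 ⊆ ℝ^{mN×pN}` be a linear subspace
such that `K·G` is nilpotent for every `K ∈ 𝒦`. The following are equivalent:
(1) the set `{(I − K·G)⁻¹·K : K ∈ 𝒦}` is convex;
(2) `𝒦` is quadratically invariant with respect to `G` (`K·G·K ∈ 𝒦` for all `K ∈ 𝒦`);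
(3) `{(I − K·G)⁻¹·K : K ∈ 𝒦} = 𝒦`. -/
theorem quadratic_invariance_tfae {m p N : ℕ}
    (hm : 0 < m) (hp : 0 < p) (hN : 0 < N)
    (G : Matrix (Fin (p * N)) (Fin (m * N)) ℝ)
    (𝒦 : Submodule ℝ (Matrix (Fin (m * N)) (Fin (p * N)) ℝ))
    (hnilp : ∀ K ∈ 𝒦, IsNilpotent (K * G)) :
    (Convex ℝ ((fun K : Matrix (Fin (m * N)) (Fin (p * N)) ℝ => (1 - K * G)⁻¹ * K) ''
        (𝒦 : Set (Matrix (Fin (m * N)) (Fin (p * N)) ℝ))) ↔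
      ∀ K ∈ 𝒦, K * G * K ∈ 𝒦) ∧
    ((∀ K ∈ 𝒦, K * G * K ∈ 𝒦) ↔
      (fun K : Matrix (Fin (m * N)) (Fin (p * N)) ℝ => (1 - K * G)⁻¹ * K) ''
        (𝒦 : Set (Matrix (Fin (m * N)) (Fin (p * N)) ℝ)) =
        (𝒦 : Set (Matrix (Fin (m * N)) (Fin (p * N)) ℝ))) :=
  quadratic_invariance_tfae_general G 𝒦 hnilp
end

section
/- Closure of a strongly QI subspace under the feedback transformation: let 𝒦 ⊆ ℝ^{mN×pN} be a linear subspace that is strongly quadratically invariant with respect to G, and suppose Q·G is nilpotent for every Q ∈ 𝒦. Then for every Q ∈ 𝒦, the matrix (I + Q·G)^{-1}·Q belongs to 𝒦, and likewise (I − Q·G)^{-1}·Q belongs to 𝒦. -/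
/-!
Because `Q * G` is nilpotent, `(1 - Q * G)⁻¹ * Q` is the finite Neumann sum
`∑ (Q * G) ^ i * Q`, and strong quadratic invariance puts every term
`(Q * G) ^ (i + 1) * Q = Q * G * ((Q * G) ^ i * Q)` back into `𝒦`. The `1 + Q * G` case is the
`1 - Q * G` case applied to `-Q ∈ 𝒦`.
-/

open Matrix Finset

variable {m n R : Type*} [Fintype m] [Fintype n] [DecidableEq m]

theorem Matrix.inv_one_sub_eq_geom_sum_s6 [CommRing R] {A : Matrix m m R} {k : ℕ} (hA : A ^ k = 0) :
    (1 - A)⁻¹ = ∑ i ∈ range k, A ^ i :=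
  inv_eq_right_inv <| by rw [mul_neg_geom_sum, hA, sub_zero]

def IsStronglyQI [Semiring R] (G : Matrix n m R) (𝒦 : Submodule R (Matrix m n R)) : Prop :=
  ∀ K₁ ∈ 𝒦, ∀ K₂ ∈ 𝒦, K₁ * G * K₂ ∈ 𝒦

namespace IsStronglyQI

theorem pow_mul_mem [Semiring R] {G : Matrix n m R} {𝒦 : Submodule R (Matrix m n R)}
    (h𝒦 : IsStronglyQI G 𝒦) {Q : Matrix m n R} (hQ : Q ∈ 𝒦) (i : ℕ) :
    (Q * G) ^ i * Q ∈ 𝒦 := by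
  induction i with
  | zero => simpa using hQ
  | succ i ih =>
    rw [pow_succ', Matrix.mul_assoc]
    exact h𝒦 Q hQ _ ih

theorem inv_one_sub_mul_mem [CommRing R] {G : Matrix n m R}
    {𝒦 : Submodule R (Matrix m n R)} (h𝒦 : IsStronglyQI G 𝒦) {Q : Matrix m n R} (hQ : Q ∈ 𝒦)
    (hQG : IsNilpotent (Q * G)) : (1 - Q * G)⁻¹ * Q ∈ 𝒦 := by
  obtain ⟨k, hk⟩ := hQG
  rw [inv_one_sub_eq_geom_sum_s6 hk, Matrix.sum_mul]
  exact 𝒦.sum_mem fun i _ => h𝒦.pow_mul_mem hQ i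

end IsStronglyQI

theorem strongQI_closed_feedback_general {m p N : ℕ}
    (G : Matrix (Fin (p * N)) (Fin (m * N)) ℝ)
    (𝒦 : Submodule ℝ (Matrix (Fin (m * N)) (Fin (p * N)) ℝ))
    (hSQI : ∀ K₁ ∈ 𝒦, ∀ K₂ ∈ 𝒦, K₁ * G * K₂ ∈ 𝒦)
    (hnilp : ∀ Q ∈ 𝒦, IsNilpotent (Q * G)) :
    ∀ Q ∈ 𝒦, (1 + Q * G)⁻¹ * Q ∈ 𝒦 ∧ (1 - Q * G)⁻¹ * Q ∈ 𝒦 := by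
  have h𝒦 : IsStronglyQI G 𝒦 := hSQI
  intro Q hQ
  refine ⟨?_, h𝒦.inv_one_sub_mul_mem hQ (hnilp Q hQ)⟩
  have hnegQ : (1 - -Q * G)⁻¹ * -Q ∈ 𝒦 :=
    h𝒦.inv_one_sub_mul_mem (𝒦.neg_mem hQ) (hnilp _ (𝒦.neg_mem hQ))
  simpa [neg_mul, sub_neg_eq_add] using 𝒦.neg_mem hnegQ

/-- Closure of a strongly QI subspace under the feedback transformation:
if `𝒦 ⊆ ℝ^{mN×pN}` is strongly quadratically invariant with respect to `G`
(`K₁·G·K₂ ∈ 𝒦` for all `K₁, K₂ ∈ 𝒦`) and `Q·G` is nilpotent for every `Q ∈ 𝒦`, then for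
every `Q ∈ 𝒦` both `(I + Q·G)⁻¹·Q` and `(I − Q·G)⁻¹·Q` belong to `𝒦`. -/
theorem strongQI_closed_feedback {m p N : ℕ}
    (hm : 0 < m) (hp : 0 < p) (hN : 0 < N)
    (G : Matrix (Fin (p * N)) (Fin (m * N)) ℝ)
    (𝒦 : Submodule ℝ (Matrix (Fin (m * N)) (Fin (p * N)) ℝ))
    (hSQI : ∀ K₁ ∈ 𝒦, ∀ K₂ ∈ 𝒦, K₁ * G * K₂ ∈ 𝒦)
    (hnilp : ∀ Q ∈ 𝒦, IsNilpotent (Q * G)) :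
    ∀ Q ∈ 𝒦, (1 + Q * G)⁻¹ * Q ∈ 𝒦 ∧ (1 - Q * G)⁻¹ * Q ∈ 𝒦 :=
  strongQI_closed_feedback_general G 𝒦 hSQI hnilp
end

section
/- Existence of Wolfe step lengths: suppose f : ℝ^n → ℝ is continuously differentiable and bounded below. Let x ∈ ℝ^n and let p ∈ ℝ^n be a descent direction at x, i.e. ∇f(x)ᵀp < 0, and let 0 < c₁ < c₂ < 1. Then there exists a nonempty open interval (a, b) with 0 < a < b such that every η ∈ (a, b) satisfies both Wolfe conditions: f(x + η·p) ≤ f(x) + c₁·η·∇f(x)ᵀp and ∇f(x + η·p)ᵀp ≥ c₂·∇f(x)ᵀp. -/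
open scoped RealInnerProductSpace
open Set Filter Topology

/-!
Restrict `f` to the ray, `φ t = f (x + t • p)`. The Armijo gap `φ t - (φ 0 + c₁ t φ' 0)` vanishes
at `0` with negative derivative `(1 - c₁) φ' 0`, and is nonnegative for some large `T` because `φ`
is bounded below while the Armijo line tends to `-∞`. So its minimum on `[0, T]` is negative and
attained at an interior point `η`, where `φ' η = c₁ φ' 0 > c₂ φ' 0`. Both Wolfe conditions thus hold
strictly at `η`, hence on an open interval around it.
-/

theorem HasDerivAt.exists_lt_of_deriv_neg {g : ℝ → ℝ} {g' a b : ℝ} (hg : HasDerivAt g g' a)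
    (hg' : g' < 0) (hab : a < b) : ∃ t ∈ Ioo a b, g t < g a := by
  have hslope : Tendsto (slope g a) (𝓝[>] a) (𝓝 g') :=
    (hasDerivAt_iff_tendsto_slope.mp hg).mono_left (nhdsGT_le_nhdsNE a)
  obtain ⟨t, hneg, ht⟩ :=
    ((hslope.eventually_lt_const hg').and (Ioo_mem_nhdsGT hab)).exists
  refine ⟨t, ht, ?_⟩
  rw [slope_def_field, div_neg_iff] at hneg
  rcases hneg with ⟨-, h⟩ | ⟨h, -⟩
  · linarith [ht.1]
  · linarith

theorem exists_hasDerivAt_eq_zero_lt_of_deriv_neg {g g' : ℝ → ℝ} {a b : ℝ} (hab : a < b)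
    (hg : ∀ t ∈ Icc a b, HasDerivAt g (g' t) t) (ha : g' a < 0) (hb : g a ≤ g b) :
    ∃ c ∈ Ioo a b, g c < g a ∧ g' c = 0 := by
  have hcont : ContinuousOn g (Icc a b) := fun t ht => (hg t ht).continuousAt.continuousWithinAt
  obtain ⟨c, hc, hmin⟩ := isCompact_Icc.exists_isMinOn (nonempty_Icc.2 hab.le) hcont
  obtain ⟨t, ht, hgt⟩ := (hg a (left_mem_Icc.2 hab.le)).exists_lt_of_deriv_neg ha hab
  have hca : g c < g a := (hmin (Ioo_subset_Icc_self ht)).trans_lt hgt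
  have hc' : c ∈ Ioo a b :=
    ⟨hc.1.lt_of_ne (by rintro rfl; exact hca.false), hc.2.lt_of_ne (by rintro rfl; linarith)⟩
  exact ⟨c, hc', hca, (hmin.isLocalMin (Icc_mem_nhds hc'.1 hc'.2)).hasDerivAt_eq_zero (hg c hc)⟩

theorem BddBelow.exists_pos_add_mul_le {φ : ℝ → ℝ} (hφ : BddBelow (φ '' Ioi 0)) {s : ℝ}
    (hs : s < 0) (y : ℝ) : ∃ T > 0, y + s * T ≤ φ T := by
  obtain ⟨B, hB⟩ := hφ
  have hlin : Tendsto (fun T => y + s * T) atTop atBot :=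
    tendsto_atBot_add_const_left _ y (tendsto_id.const_mul_atTop_of_neg hs)
  obtain ⟨T, hT, hyT⟩ := ((eventually_gt_atTop 0).and (hlin.eventually_le_atBot B)).exists
  exact ⟨T, hT, hyT.trans (hB (mem_image_of_mem φ hT))⟩

theorem IsOpen.exists_Ioo_subset_of_mem_Ioi {U : Set ℝ} (hU : IsOpen U) {η : ℝ} (hη : η ∈ U)
    (hpos : 0 < η) : ∃ a b, 0 < a ∧ a < b ∧ Ioo a b ⊆ U := by
  obtain ⟨l, u, ⟨hl, hu⟩, hsub⟩ := mem_nhds_iff_exists_Ioo_subset.mp (hU.mem_nhds hη)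
  exact ⟨max l (η / 2), u, by positivity, max_lt hl (by linarith) |>.trans hu,
    (Ioo_subset_Ioo_left (le_max_left _ _)).trans hsub⟩

theorem exists_wolfe_step_lengths_of_hasDerivAt {φ φ' : ℝ → ℝ} (hφ : ∀ t, HasDerivAt φ (φ' t) t)
    (hφ' : Continuous φ') (hbdd : BddBelow (φ '' Ioi 0)) (hdesc : φ' 0 < 0) {c₁ c₂ : ℝ}
    (hc₁ : 0 < c₁) (hc₁_lt_one : c₁ < 1) (hc₁₂ : c₁ < c₂) :
    ∃ a b : ℝ, 0 < a ∧ a < b ∧ ∀ η ∈ Ioo a b,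
      φ η ≤ φ 0 + c₁ * η * φ' 0 ∧ c₂ * φ' 0 ≤ φ' η := by
  have hgap : ∀ t, HasDerivAt (fun t => φ t - (φ 0 + c₁ * t * φ' 0)) (φ' t - c₁ * φ' 0) t :=
    fun t => by
      have hline := (((hasDerivAt_id' t).const_mul c₁).mul_const (φ' 0)).const_add (φ 0)
      rw [mul_one] at hline
      exact (hφ t).sub hline
  obtain ⟨T, hT, hφT⟩ := hbdd.exists_pos_add_mul_le (mul_neg_of_pos_of_neg hc₁ hdesc) (φ 0)
  obtain ⟨η, hη, hgapη, hφ'η⟩ := exists_hasDerivAt_eq_zero_lt_of_deriv_neg hT (fun t _ => hgap t)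
    (by nlinarith) (by linarith)
  have hopen : IsOpen {t | φ t < φ 0 + c₁ * t * φ' 0 ∧ c₂ * φ' 0 < φ' t} :=
    (isOpen_lt (continuous_iff_continuousAt.2 fun t => (hφ t).continuousAt) (by fun_prop)).inter
      (isOpen_lt continuous_const hφ')
  have hηmem : φ η < φ 0 + c₁ * η * φ' 0 ∧ c₂ * φ' 0 < φ' η := by
    constructor <;> nlinarith
  obtain ⟨a, b, ha, hab, hsub⟩ := hopen.exists_Ioo_subset_of_mem_Ioi hηmem hη.1
  exact ⟨a, b, ha, hab, fun t ht => ⟨(hsub ht).1.le, (hsub ht).2.le⟩⟩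

section InnerProductSpace

variable {E : Type*} [NormedAddCommGroup E] [InnerProductSpace ℝ E] [CompleteSpace E] {f : E → ℝ}

theorem ContDiff.continuous_gradient (hf : ContDiff ℝ 1 f) : Continuous (gradient f) :=
  (InnerProductSpace.toDual ℝ E).symm.continuous.comp (hf.continuous_fderiv one_ne_zero)

theorem HasGradientAt.hasDerivAt_comp_add_smul {g x p : E} {t : ℝ}
    (h : HasGradientAt f g (x + t • p)) : HasDerivAt (fun s : ℝ => f (x + s • p)) ⟪g, p⟫ t := by
  have hline : HasDerivAt (fun s : ℝ => x + s • p) p t := by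
    simpa using ((hasDerivAt_id t).smul_const p).const_add x
  exact h.hasFDerivAt.comp_hasDerivAt t hline

end InnerProductSpace

/-- **existence of Wolfe step lengths.** If `f : ℝ^n → ℝ` is continuously
differentiable and bounded below, `p` is a descent direction at `x` (`∇f(x)ᵀp < 0`) and
`0 < c₁ < c₂ < 1`, then there is a nonempty open interval `(a, b)` with `0 < a < b` whose
every element `η` satisfies both Wolfe conditions
`f(x + η·p) ≤ f(x) + c₁·η·∇f(x)ᵀp` and `∇f(x + η·p)ᵀp ≥ c₂·∇f(x)ᵀp`. -/
theorem exists_wolfe_step_lengths {n : ℕ}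
    (f : EuclideanSpace ℝ (Fin n) → ℝ)
    (hf : ContDiff ℝ 1 f) (hbdd : BddBelow (Set.range f))
    (x p : EuclideanSpace ℝ (Fin n))
    (hdesc : ⟪gradient f x, p⟫ < 0)
    (c₁ c₂ : ℝ) (hc₁ : 0 < c₁) (hc₁₂ : c₁ < c₂) (hc₂ : c₂ < 1) :
    ∃ a b : ℝ, 0 < a ∧ a < b ∧ ∀ η ∈ Set.Ioo a b,
      f (x + η • p) ≤ f x + c₁ * η * ⟪gradient f x, p⟫ ∧
      c₂ * ⟪gradient f x, p⟫ ≤ ⟪gradient f (x + η • p), p⟫ := by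
  have hderiv : ∀ t : ℝ, HasDerivAt (fun s : ℝ => f (x + s • p)) ⟪gradient f (x + t • p), p⟫ t :=
    fun t => ((hf.differentiable one_ne_zero) _).hasGradientAt.hasDerivAt_comp_add_smul
  have hcont : Continuous fun t : ℝ => ⟪gradient f (x + t • p), p⟫ :=
    (hf.continuous_gradient.comp (by fun_prop)).inner continuous_const
  have hbdd_line : BddBelow ((fun s : ℝ => f (x + s • p)) '' Ioi 0) :=
    hbdd.mono (image_subset_iff.2 fun s _ => mem_range_self _)
  simpa using exists_wolfe_step_lengths_of_hasDerivAt hderiv hcont hbdd_line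
    (by simpa using hdesc) hc₁ (by linarith) hc₁₂
end

section
/- Binary test for strong quadratic invariance: let S ∈ {0,1}^{mN×pN} be a binary matrix, let G ∈ ℝ^{pN×mN}, and let Δ := Struct(G) ∈ {0,1}^{pN×mN} be the binary matrix with Δ_{ij} = 0 if G_{ij} = 0 and Δ_{ij} = 1 otherwise. If the Boolean product satisfies S·Δ·S ≤ S entrywise, then Sparse(S) is strongly quadratically invariant with respect to G: K₁·G·K₂ ∈ Sparse(S) for all K₁, K₂ ∈ Sparse(S). -/
open Matrix

theorem Matrix.mul_mul_apply_eq_zero {l m n o α : Type*} [Fintype m] [Fintype n]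
    [NonUnitalNonAssocSemiring α] (A : Matrix l m α) (B : Matrix m n α) (C : Matrix n o α)
    (i : l) (k : o) (h : ∀ j r, A i j = 0 ∨ B j r = 0 ∨ C r k = 0) :
    (A * B * C) i k = 0 := by
  simp only [mul_apply, Finset.sum_mul]
  refine Finset.sum_eq_zero fun r _ => Finset.sum_eq_zero fun j _ => ?_
  rcases h j r with h | h | h <;> simp [h]

theorem binary_test_strong_QI_general {m p N : ℕ}
    (S : Matrix (Fin (m * N)) (Fin (p * N)) Bool)
    (G : Matrix (Fin (p * N)) (Fin (m * N)) ℝ)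
    (htest : ∀ i k, (∃ j l, S i j = true ∧ G j l ≠ 0 ∧ S l k = true) → S i k = true) :
    ∀ K₁ K₂ : Matrix (Fin (m * N)) (Fin (p * N)) ℝ,
      (∀ i j, S i j = false → K₁ i j = 0) →
      (∀ i j, S i j = false → K₂ i j = 0) →
      ∀ i j, S i j = false → (K₁ * G * K₂) i j = 0 := by
  intro K₁ K₂ hK₁ hK₂ i k hik
  refine mul_mul_apply_eq_zero K₁ G K₂ i k fun j l => ?_
  by_contra! hne
  obtain ⟨hij, hG, hlk⟩ := hne
  have hpath : S i j = true ∧ G j l ≠ 0 ∧ S l k = true :=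
    ⟨by_contra fun h => hij (hK₁ i j (Bool.eq_false_iff.mpr h)), hG,
      by_contra fun h => hlk (hK₂ l k (Bool.eq_false_iff.mpr h))⟩
  simp [htest i k ⟨j, l, hpath⟩] at hik

/-- **binary test for strong quadratic invariance.** Let `S` be a binary
matrix, `G ∈ ℝ^{pN×mN}`, and `Δ := Struct(G)` its sparsity pattern. If the Boolean product
satisfies `S·Δ·S ≤ S` entrywise (whenever there are `j, l` with `S i j = 1`, `G j l ≠ 0` and
`S l k = 1`, then `S i k = 1`), then `Sparse(S)` is strongly quadratically invariant with
respect to `G`: `K₁·G·K₂ ∈ Sparse(S)` for all `K₁, K₂ ∈ Sparse(S)`. -/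
theorem binary_test_strong_QI {m p N : ℕ}
    (hm : 0 < m) (hp : 0 < p) (hN : 0 < N)
    (S : Matrix (Fin (m * N)) (Fin (p * N)) Bool)
    (G : Matrix (Fin (p * N)) (Fin (m * N)) ℝ)
    (htest : ∀ i k, (∃ j l, S i j = true ∧ G j l ≠ 0 ∧ S l k = true) → S i k = true) :
    ∀ K₁ K₂ : Matrix (Fin (m * N)) (Fin (p * N)) ℝ,
      (∀ i j, S i j = false → K₁ i j = 0) →
      (∀ i j, S i j = false → K₂ i j = 0) →
      ∀ i j, S i j = false → (K₁ * G * K₂) i j = 0 :=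
  binary_test_strong_QI_general S G htest
end
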